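/- arXiv:2203.08932 — 2 statements merged into one kernel-verified Lean document; each statement's English description precedes it below -/
import Mathlib

section
/- Let x_1, …, x_n (positive objects) and z_1, …, z_m (negative objects) be points of a real inner product space, let p > 1, c₁ > 0, c₂ > 0, R ∈ ℝ, and let α_1, …, α_n ≥ 0 and β_1, …, β_m ≥ 0 satisfy Σ_i α_i − Σ_l β_l = 1. Set O = Σ_i α_i x_i − Σ_l β_l z_l, ζ_i = (α_i/(c₁·p))^{1/(p−1)}, ξ_l = (β_l/(c₂·p))^{1/(p−1)} and q = p/(p−1). Then R² + c₁·Σ_i ζ_i^p + c₂·Σ_l ξ_l^p − Σ_i α_i (R² + ζ_i − ‖x_i − O‖²) − Σ_l β_l (‖z_l − O‖² − R² + ξ_l) = (c₁·p)^{−1/(p−1)}·(1/p − 1)·Σ_i α_i^q + (c₂·p)^{−1/(p−1)}·(1/p − 1)·Σ_l β_l^q + Σ_i α_i ⟨x_i, x_i⟩ − Σ_l β_l ⟨z_l, z_l⟩ − Σ_i Σ_j α_i α_j ⟨x_i, x_j⟩ − Σ_l Σ_k β_l β_k ⟨z_l, z_k⟩ + 2·Σ_i Σ_l α_i β_l ⟨x_i,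 z_l⟩. -/
open scoped RealInnerProductSpace

private lemma slack_identity (p c a : ℝ) (hp : 1 < p) (hc : 0 < c) (ha : 0 ≤ a) :
    c * ((a / (c * p)) ^ (1 / (p - 1))) ^ p - a * (a / (c * p)) ^ (1 / (p - 1)) =
      (c * p) ^ (-(1 / (p - 1))) * (1 / p - 1) * a ^ (p / (p - 1)) := by
  have hp0 : 0 < p := lt_trans one_pos hp
  have hp1 : 0 < p - 1 := by linarith
  have he : 0 < 1 / (p - 1) := by positivity
  have hA : 0 < c * p := by positivity
  rcases eq_or_lt_of_le ha with h0 | ha'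
  · rw [← h0]
    rw [zero_div, Real.zero_rpow he.ne', Real.zero_rpow (by positivity : p / (p - 1) ≠ 0),
      Real.zero_rpow hp0.ne']
    ring
  · set e := 1 / (p - 1) with hedef
    have hq : e * p = p / (p - 1) := by rw [hedef]; ring
    have hpe : (p - 1) * e = 1 := by rw [hedef]; field_simp
    have h1e : e * p = 1 + e := by linear_combination hpe
    have hcp : (c * p) ^ (e * p) = (c * p) ^ e * (c * p) := by
      rw [h1e, Real.rpow_add hA, Real.rpow_one, mul_comm]
    have h1 : ((a / (c * p)) ^ e) ^ p = a ^ (p / (p - 1)) / ((c * p) ^ e * (c * p)) := by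
      rw [Real.div_rpow ha hA.le, Real.div_rpow (Real.rpow_nonneg ha e)
        (Real.rpow_nonneg hA.le e), ← Real.rpow_mul ha, ← Real.rpow_mul hA.le, hcp, hq]
    have h2 : a * (a / (c * p)) ^ e = a ^ (p / (p - 1)) / (c * p) ^ e := by
      rw [Real.div_rpow ha hA.le]
      have : p / (p - 1) = 1 + e := by rw [← hq]; exact h1e
      rw [this, Real.rpow_add ha', Real.rpow_one]
      ring
    have h3 : (c * p) ^ (-e) = ((c * p) ^ e)⁻¹ := Real.rpow_neg hA.le e
    have hAe : (0:ℝ) < (c * p) ^ e := Real.rpow_pos_of_pos hA e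
    rw [h1, h2, h3]
    field_simp

/-- Substituting the stationarity conditions into the Lagrangian of the ℓ_p slack norm
SVDD problem with labelled negative samples yields the dual objective. -/
theorem lp_svdd_dual_lagrangian_with_negatives {E : Type*}
    [NormedAddCommGroup E] [InnerProductSpace ℝ E]
    (n m : ℕ) (x : Fin n → E) (z : Fin m → E) (p c₁ c₂ R : ℝ)
    (hp : 1 < p) (hc₁ : 0 < c₁) (hc₂ : 0 < c₂)
    (α : Fin n → ℝ) (β : Fin m → ℝ) (hα : ∀ i, 0 ≤ α i) (hβ : ∀ l, 0 ≤ β l)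
    (hsum : (∑ i, α i) - (∑ l, β l) = 1)
    (O : E) (hO : O = (∑ i, α i • x i) - ∑ l, β l • z l)
    (ζ : Fin n → ℝ) (hζ : ∀ i, ζ i = (α i / (c₁ * p)) ^ (1 / (p - 1)))
    (ξ : Fin m → ℝ) (hξ : ∀ l, ξ l = (β l / (c₂ * p)) ^ (1 / (p - 1)))
    (q : ℝ) (hq : q = p / (p - 1)) :
    R ^ 2 + c₁ * (∑ i, ζ i ^ p) + c₂ * (∑ l, ξ l ^ p) -
        (∑ i, α i * (R ^ 2 + ζ i - ‖x i - O‖ ^ 2)) -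
        (∑ l, β l * (‖z l - O‖ ^ 2 - R ^ 2 + ξ l)) =
      (c₁ * p) ^ (-(1 / (p - 1))) * (1 / p - 1) * (∑ i, α i ^ q) +
        (c₂ * p) ^ (-(1 / (p - 1))) * (1 / p - 1) * (∑ l, β l ^ q) +
        (∑ i, α i * ⟪x i, x i⟫) - (∑ l, β l * ⟪z l, z l⟫) -
        (∑ i, ∑ j, α i * α j * ⟪x i, x j⟫) -
        (∑ l, ∑ k, β l * β k * ⟪z l, z k⟫) +
        2 * ∑ i, ∑ l, α i * β l * ⟪x i, z l⟫ := by
  set u : E := ∑ i, α i • x i with hu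
  set v : E := ∑ l, β l • z l with hv
  -- inner products of the weighted sums
  have hul : ∀ y : E, ⟪u, y⟫ = ∑ i, α i * ⟪x i, y⟫ := by
    intro y; rw [hu, sum_inner]; simp [real_inner_smul_left]
  have hvl : ∀ y : E, ⟪v, y⟫ = ∑ l, β l * ⟪z l, y⟫ := by
    intro y; rw [hv, sum_inner]; simp [real_inner_smul_left]
  set P : ℝ := ∑ i, ∑ j, α i * α j * ⟪x i, x j⟫ with hP
  set Q : ℝ := ∑ l, ∑ k, β l * β k * ⟪z l, z k⟫ with hQ
  set C : ℝ := ∑ i, ∑ l, α i * β l * ⟪x i, z l⟫ with hC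
  have huu : ⟪u, u⟫ = P := by
    rw [hul u, hP]
    refine Finset.sum_congr rfl fun i _ => ?_
    rw [hu, inner_sum, Finset.mul_sum]
    refine Finset.sum_congr rfl fun j _ => ?_
    rw [real_inner_smul_right]; ring
  have hvv : ⟪v, v⟫ = Q := by
    rw [hvl v, hQ]
    refine Finset.sum_congr rfl fun l _ => ?_
    rw [hv, inner_sum, Finset.mul_sum]
    refine Finset.sum_congr rfl fun k _ => ?_
    rw [real_inner_smul_right]; ring
  have huv : ⟪u, v⟫ = C := by
    rw [hul v, hC]
    refine Finset.sum_congr rfl fun i _ => ?_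
    rw [hv, inner_sum, Finset.mul_sum]
    refine Finset.sum_congr rfl fun l _ => ?_
    rw [real_inner_smul_right]; ring
  have hOu : ⟪u, O⟫ = P - C := by
    rw [hO, inner_sub_right, huu, huv]
  have hvu : ⟪v, u⟫ = C := (real_inner_comm u v).trans huv
  have hOv : ⟪v, O⟫ = C - Q := by
    rw [hO, inner_sub_right, hvv, hvu]
  have hOO : ⟪O, O⟫ = P - 2 * C + Q := by
    rw [hO, inner_sub_left, inner_sub_right, inner_sub_right, huu, huv, hvv, hvu]
    ring
  -- expand the squared norms
  have hxn : ∀ i, ‖x i - O‖ ^ 2 = ⟪x i, x i⟫ - 2 * ⟪x i, O⟫ + ⟪O, O⟫ := by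
    intro i
    rw [norm_sub_sq_real, ← real_inner_self_eq_norm_sq, ← real_inner_self_eq_norm_sq]
  have hzn : ∀ l, ‖z l - O‖ ^ 2 = ⟪z l, z l⟫ - 2 * ⟪z l, O⟫ + ⟪O, O⟫ := by
    intro l
    rw [norm_sub_sq_real, ← real_inner_self_eq_norm_sq, ← real_inner_self_eq_norm_sq]
  -- the Lagrangian sums
  have hA : (∑ i, α i * (R ^ 2 + ζ i - ‖x i - O‖ ^ 2)) =
      (∑ i, α i) * R ^ 2 + (∑ i, α i * ζ i) -
        ((∑ i, α i * ⟪x i, x i⟫) - 2 * (P - C) + (∑ i, α i) * ⟪O, O⟫) := by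
    have h1 : (∑ i, α i * (R ^ 2 + ζ i - ‖x i - O‖ ^ 2)) =
        ∑ i, (α i * R ^ 2 + α i * ζ i -
          (α i * ⟪x i, x i⟫ - 2 * (α i * ⟪x i, O⟫) + α i * ⟪O, O⟫)) := by
      refine Finset.sum_congr rfl fun i _ => ?_
      rw [hxn i]; ring
    rw [h1]
    rw [Finset.sum_sub_distrib, Finset.sum_add_distrib, Finset.sum_add_distrib,
      Finset.sum_sub_distrib, ← Finset.sum_mul, ← Finset.mul_sum, ← Finset.sum_mul]
    have : (∑ i, α i * ⟪x i, O⟫) = P - C := by rw [← hul O, hOu]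
    rw [this]
  have hB : (∑ l, β l * (‖z l - O‖ ^ 2 - R ^ 2 + ξ l)) =
      ((∑ l, β l * ⟪z l, z l⟫) - 2 * (C - Q) + (∑ l, β l) * ⟪O, O⟫) -
        (∑ l, β l) * R ^ 2 + (∑ l, β l * ξ l) := by
    have h1 : (∑ l, β l * (‖z l - O‖ ^ 2 - R ^ 2 + ξ l)) =
        ∑ l, ((β l * ⟪z l, z l⟫ - 2 * (β l * ⟪z l, O⟫) + β l * ⟪O, O⟫) -
          β l * R ^ 2 + β l * ξ l) := by
      refine Finset.sum_congr rfl fun l _ => ?_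
      rw [hzn l]; ring
    rw [h1]
    rw [Finset.sum_add_distrib, Finset.sum_sub_distrib, Finset.sum_add_distrib,
      Finset.sum_sub_distrib, ← Finset.sum_mul, ← Finset.mul_sum, ← Finset.sum_mul]
    have : (∑ l, β l * ⟪z l, O⟫) = C - Q := by rw [← hvl O, hOv]
    rw [this]
  -- the slack-term identities
  have hS1 : c₁ * (∑ i, ζ i ^ p) - (∑ i, α i * ζ i) =
      (c₁ * p) ^ (-(1 / (p - 1))) * (1 / p - 1) * (∑ i, α i ^ q) := by
    rw [Finset.mul_sum, Finset.mul_sum, ← Finset.sum_sub_distrib]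
    refine Finset.sum_congr rfl fun i _ => ?_
    rw [hζ i, hq]
    exact slack_identity p c₁ (α i) hp hc₁ (hα i)
  have hS2 : c₂ * (∑ l, ξ l ^ p) - (∑ l, β l * ξ l) =
      (c₂ * p) ^ (-(1 / (p - 1))) * (1 / p - 1) * (∑ l, β l ^ q) := by
    rw [Finset.mul_sum, Finset.mul_sum, ← Finset.sum_sub_distrib]
    refine Finset.sum_congr rfl fun l _ => ?_
    rw [hξ l, hq]
    exact slack_identity p c₂ (β l) hp hc₂ (hβ l)
  rw [hA, hB, hOO]
  linear_combination hS1 + hS2 + ((P - 2 * C + Q) - R ^ 2) * hsum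
end

section
/- Let n ≥ 1, let T be a nonempty bounded subset of ℝ^n, and let A : ℝ → ℝ be L-Lipschitz with A(0) = 0. Then 2^{−n}·Σ_{σ ∈ {−1,1}^n} sup_{t ∈ T} |Σ_i σ_i·A(t_i)| ≤ 2·L·2^{−n}·Σ_{σ ∈ {−1,1}^n} sup_{t ∈ T} |Σ_i σ_i·t_i|. -/
def sgn {n : ℕ} (σ : Fin n → Bool) (i : Fin n) : ℝ := if σ i then 1 else -1

lemma sgn_def {n : ℕ} (σ : Fin n → Bool) (i : Fin n) :
    sgn σ i = if σ i then (1:ℝ) else -1 := rfl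

lemma abs_sgn {n : ℕ} (σ : Fin n → Bool) (i : Fin n) : |sgn σ i| = 1 := by
  unfold sgn; split <;> simp

lemma sgn_update_same {n : ℕ} (σ : Fin n → Bool) (j : Fin n) (b : Bool) :
    sgn (Function.update σ j b) j = if b then (1:ℝ) else -1 := by
  simp [sgn]

lemma sgn_update_ne {n : ℕ} (σ : Fin n → Bool) (j i : Fin n) (b : Bool) (h : i ≠ j) :
    sgn (Function.update σ j b) i = sgn σ i := by
  simp [sgn, Function.update_of_ne h]

lemma sgn_not {n : ℕ} (σ : Fin n → Bool) (i : Fin n) :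
    sgn (fun k => !σ k) i = - sgn σ i := by
  by_cases h : σ i <;> simp [sgn, h]

lemma bdd_of_le {α : Type*} (f : α → ℝ) (C : ℝ) (h : ∀ a, f a ≤ C) :
    BddAbove (Set.range f) := ⟨C, by rintro _ ⟨a, rfl⟩; exact h a⟩

noncomputable def Frad {n : ℕ} (T' : Set (Fin n → ℝ)) (A : ℝ → ℝ) (L : ℝ)
    (s : Finset (Fin n)) (σ : Fin n → Bool) : ℝ :=
  ⨆ t : T', (∑ i ∈ s, sgn σ i * A (t.1 i) + ∑ i ∈ sᶜ, sgn σ i * (L * t.1 i))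

lemma key_step {α : Type*} [Nonempty α] (g h k : α → ℝ) (L : ℝ)
    (hlip : ∀ a b, |h a - h b| ≤ L * |k a - k b|)
    (b1 : BddAbove (Set.range fun a => g a + L * k a))
    (b2 : BddAbove (Set.range fun a => g a - L * k a)) :
    (⨆ a, (g a + h a)) + (⨆ a, (g a - h a)) ≤
      (⨆ a, (g a + L * k a)) + (⨆ a, (g a - L * k a)) := by
  have H : ∀ a b, (g a + h a) + (g b - h b) ≤
      (⨆ a, (g a + L * k a)) + (⨆ a, (g a - L * k a)) := by
    intro a b
    have h1 := hlip a b
    have h2 : h a - h b ≤ |h a - h b| := le_abs_self _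
    rcases le_total (k b) (k a) with hc | hc
    · have e0 : |k a - k b| = k a - k b := abs_of_nonneg (by linarith)
      have e1 : g a + L * k a ≤ ⨆ a, (g a + L * k a) := le_ciSup b1 a
      have e2 : g b - L * k b ≤ ⨆ a, (g a - L * k a) := le_ciSup b2 b
      rw [e0] at h1; nlinarith
    · have e0 : |k a - k b| = k b - k a := by
        rw [abs_of_nonpos (by linarith)]; ring
      have e1 : g b + L * k b ≤ ⨆ a, (g a + L * k a) := le_ciSup b1 b
      have e2 : g a - L * k a ≤ ⨆ a, (g a - L * k a) := le_ciSup b2 a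
      rw [e0] at h1; nlinarith
  have h3 : (⨆ a, (g a + h a)) ≤
      ((⨆ a, (g a + L * k a)) + (⨆ a, (g a - L * k a))) - (⨆ b, (g b - h b)) := by
    refine ciSup_le fun a => ?_
    rw [le_sub_iff_add_le, add_comm]
    have : (⨆ b, (g b - h b)) ≤
        ((⨆ a, (g a + L * k a)) + (⨆ a, (g a - L * k a))) - (g a + h a) := by
      refine ciSup_le fun b => ?_
      have := H a b; linarith
    linarith
  linarith

lemma sum_pair {n : ℕ} (j : Fin n) (f : (Fin n → Bool) → ℝ) :
    2 * ∑ σ : Fin n → Bool, f σ =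
      ∑ σ : Fin n → Bool, (f (Function.update σ j true) + f (Function.update σ j false)) := by
  have hinv : Function.Involutive (fun σ : Fin n → Bool => Function.update σ j (!σ j)) := by
    intro σ; funext i
    by_cases hij : i = j
    · subst hij; simp
    · simp [Function.update_of_ne hij]
  have h2 : ∑ σ : Fin n → Bool, f (Function.update σ j (!σ j)) = ∑ σ : Fin n → Bool, f σ :=
    Equiv.sum_comp hinv.toPerm f
  rw [two_mul]
  nth_rewrite 2 [← h2]
  rw [← Finset.sum_add_distrib]
  refine Finset.sum_congr rfl fun σ _ => ?_
  rcases Bool.eq_false_or_eq_true (σ j) with hb | hb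
  · have h1 : Function.update σ j true = σ := by
      conv_lhs => rw [← hb]
      exact Function.update_eq_self j σ
    simp only [hb, Bool.not_true]
    rw [h1]
  · have h1 : Function.update σ j false = σ := by
      conv_lhs => rw [← hb]
      exact Function.update_eq_self j σ
    simp only [hb, Bool.not_false]
    rw [h1]; ring

/-- Rademacher contraction principle: for a nonempty bounded set `T ⊆ ℝ^n` and an
`L`-Lipschitz function `A` with `A(0) = 0`, the empirical Rademacher average of the
composed class is at most `2·L` times that of the original class. -/
theorem rademacher_contraction (n : ℕ) (hn : 1 ≤ n) (T : Set (Fin n → ℝ))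
    (hTne : T.Nonempty) (hTb : Bornology.IsBounded T)
    (L : ℝ) (A : ℝ → ℝ) (hA0 : A 0 = 0)
    (hL : ∀ s t : ℝ, |A s - A t| ≤ L * |s - t|) :
    ((1 / 2 ^ n) * ∑ σ : Fin n → Bool,
        ⨆ t : T, |∑ i, (if σ i then (1 : ℝ) else -1) * A (t.1 i)|) ≤
      2 * L * ((1 / 2 ^ n) * ∑ σ : Fin n → Bool,
        ⨆ t : T, |∑ i, (if σ i then (1 : ℝ) else -1) * t.1 i|) := by
  simp only [← sgn_def]
  haveI : Nonempty ↥T := hTne.to_subtype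
  set T' : Set (Fin n → ℝ) := insert 0 T with hT'
  have h0T' : (0 : Fin n → ℝ) ∈ T' := Set.mem_insert _ _
  haveI : Nonempty ↥T' := ⟨⟨0, h0T'⟩⟩
  -- basic bounds
  have hL0 : 0 ≤ L := by
    have h := hL 1 0
    rw [hA0, sub_zero, sub_zero, abs_one, mul_one] at h
    exact le_trans (abs_nonneg _) h
  obtain ⟨R, hR⟩ := hTb.exists_norm_le
  set M : ℝ := max R 0 with hMdef
  have hM0 : 0 ≤ M := le_max_right R 0
  have hM : ∀ t ∈ T', ∀ i, |t i| ≤ M := by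
    intro t ht i
    rcases ht with h | h
    · simp only [h]; simpa using hM0
    · calc |t i| = ‖t i‖ := rfl
        _ ≤ ‖t‖ := norm_le_pi_norm t i
        _ ≤ R := hR t h
        _ ≤ M := le_max_left R 0
  have hAabs : ∀ x : ℝ, |A x| ≤ L * |x| := by
    intro x
    have h := hL x 0
    rwa [hA0, sub_zero, sub_zero] at h
  have LM0 : 0 ≤ L * M := mul_nonneg hL0 hM0
  -- uniform bounds over T'
  have sb1 : ∀ (s : Finset (Fin n)) (σ : Fin n → Bool) (t : ↥T'),
      ∑ i ∈ s, sgn σ i * A (t.1 i) ≤ (n : ℝ) * (L * M) := by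
    intro s σ t
    have hterm : ∀ i ∈ s, sgn σ i * A (t.1 i) ≤ L * M := by
      intro i _
      calc sgn σ i * A (t.1 i) ≤ |sgn σ i * A (t.1 i)| := le_abs_self _
        _ = |A (t.1 i)| := by rw [abs_mul, abs_sgn, one_mul]
        _ ≤ L * |t.1 i| := hAabs _
        _ ≤ L * M := mul_le_mul_of_nonneg_left (hM t.1 t.2 i) hL0
    calc ∑ i ∈ s, sgn σ i * A (t.1 i) ≤ s.card • (L * M) :=
          Finset.sum_le_card_nsmul s _ _ hterm
      _ = (s.card : ℝ) * (L * M) := nsmul_eq_mul _ _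
      _ ≤ (n : ℝ) * (L * M) := by
          refine mul_le_mul_of_nonneg_right ?_ LM0
          exact_mod_cast le_trans (Finset.card_le_univ s) (le_of_eq (by simp))
  have sb2 : ∀ (s : Finset (Fin n)) (σ : Fin n → Bool) (t : ↥T'),
      ∑ i ∈ s, sgn σ i * (L * t.1 i) ≤ (n : ℝ) * (L * M) := by
    intro s σ t
    have hterm : ∀ i ∈ s, sgn σ i * (L * t.1 i) ≤ L * M := by
      intro i _
      calc sgn σ i * (L * t.1 i) ≤ |sgn σ i * (L * t.1 i)| := le_abs_self _
        _ = L * |t.1 i| := by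
            rw [abs_mul, abs_sgn, one_mul, abs_mul, abs_of_nonneg hL0]
        _ ≤ L * M := mul_le_mul_of_nonneg_left (hM t.1 t.2 i) hL0
    calc ∑ i ∈ s, sgn σ i * (L * t.1 i) ≤ s.card • (L * M) :=
          Finset.sum_le_card_nsmul s _ _ hterm
      _ = (s.card : ℝ) * (L * M) := nsmul_eq_mul _ _
      _ ≤ (n : ℝ) * (L * M) := by
          refine mul_le_mul_of_nonneg_right ?_ LM0
          exact_mod_cast le_trans (Finset.card_le_univ s) (le_of_eq (by simp))
  have Fbd : ∀ (s₁ s₂ : Finset (Fin n)) (σ₁ σ₂ : Fin n → Bool),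
      BddAbove (Set.range fun t : ↥T' =>
        ∑ i ∈ s₁, sgn σ₁ i * A (t.1 i) + ∑ i ∈ s₂, sgn σ₂ i * (L * t.1 i)) := by
    intro s₁ s₂ σ₁ σ₂
    exact bdd_of_le _ ((n : ℝ) * (L * M) + (n : ℝ) * (L * M))
      (fun t => add_le_add (sb1 s₁ σ₁ t) (sb2 s₂ σ₂ t))
  have psibd : ∀ (σ : Fin n → Bool),
      BddAbove (Set.range fun t : ↥T' => ∑ i, sgn σ i * A (t.1 i)) := by
    intro σ
    exact bdd_of_le _ ((n : ℝ) * (L * M)) (fun t => sb1 Finset.univ σ t)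
  have absbd : ∀ (σ : Fin n → Bool),
      BddAbove (Set.range fun t : ↥T => |∑ i, sgn σ i * t.1 i|) := by
    intro σ
    refine bdd_of_le _ ((n : ℝ) * M) (fun t => ?_)
    calc |∑ i, sgn σ i * t.1 i| ≤ ∑ i, |sgn σ i * t.1 i| :=
          Finset.abs_sum_le_sum_abs _ _
      _ ≤ ∑ _i : Fin n, M := by
          refine Finset.sum_le_sum fun i _ => ?_
          rw [abs_mul, abs_sgn, one_mul]
          exact hM t.1 (Set.mem_insert_of_mem _ t.2) i
      _ = (n : ℝ) * M := by simp [mul_comm]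
  -- the core contraction over coordinates
  have core : ∀ s : Finset (Fin n),
      ∑ σ : Fin n → Bool, Frad T' A L s σ ≤ ∑ σ : Fin n → Bool, Frad T' A L ∅ σ := by
    intro s
    induction s using Finset.induction_on with
    | empty => exact le_refl _
    | @insert j s hj ih =>
      refine le_trans ?_ ih
      have h2 : 2 * ∑ σ : Fin n → Bool, Frad T' A L (insert j s) σ ≤
          2 * ∑ σ : Fin n → Bool, Frad T' A L s σ := by
        rw [sum_pair j, sum_pair j]
        refine Finset.sum_le_sum fun σ _ => ?_
        set g : ↥T' → ℝ := fun t =>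
          ∑ i ∈ s, sgn σ i * A (t.1 i) + ∑ i ∈ sᶜ.erase j, sgn σ i * (L * t.1 i) with hg
        have hjc : j ∈ sᶜ := Finset.mem_compl.2 hj
        have c1 : ∀ (b : Bool) (t : ↥T'),
            ∑ i ∈ s, sgn (Function.update σ j b) i * A (t.1 i)
              = ∑ i ∈ s, sgn σ i * A (t.1 i) :=
          fun b t => Finset.sum_congr rfl fun i hi => by
            rw [sgn_update_ne σ j i b (ne_of_mem_of_not_mem hi hj)]
        have c2 : ∀ (b : Bool) (t : ↥T'),
            ∑ i ∈ sᶜ.erase j, sgn (Function.update σ j b) i * (L * t.1 i)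
              = ∑ i ∈ sᶜ.erase j, sgn σ i * (L * t.1 i) :=
          fun b t => Finset.sum_congr rfl fun i hi => by
            rw [sgn_update_ne σ j i b (Finset.ne_of_mem_erase hi)]
        have eqA : (fun t : ↥T' =>
            ∑ i ∈ insert j s, sgn (Function.update σ j true) i * A (t.1 i) +
              ∑ i ∈ (insert j s)ᶜ, sgn (Function.update σ j true) i * (L * t.1 i))
            = fun t : ↥T' => g t + A (t.1 j) := by
          funext t
          rw [Finset.sum_insert hj, Finset.compl_insert, c1, c2, sgn_update_same, hg]
          simp only [if_true]; ring
        have eqB : (fun t : ↥T' =>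
            ∑ i ∈ insert j s, sgn (Function.update σ j false) i * A (t.1 i) +
              ∑ i ∈ (insert j s)ᶜ, sgn (Function.update σ j false) i * (L * t.1 i))
            = fun t : ↥T' => g t - A (t.1 j) := by
          funext t
          rw [Finset.sum_insert hj, Finset.compl_insert, c1, c2, sgn_update_same, hg]
          simp only [Bool.false_eq_true, if_false]; ring
        have eqC : (fun t : ↥T' =>
            ∑ i ∈ s, sgn (Function.update σ j true) i * A (t.1 i) +
              ∑ i ∈ sᶜ, sgn (Function.update σ j true) i * (L * t.1 i))
            = fun t : ↥T' => g t + L * t.1 j := by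
          funext t
          rw [← Finset.insert_erase hjc, Finset.sum_insert (Finset.notMem_erase j _),
            c1, c2, sgn_update_same, hg]
          simp only [if_true]; ring
        have eqD : (fun t : ↥T' =>
            ∑ i ∈ s, sgn (Function.update σ j false) i * A (t.1 i) +
              ∑ i ∈ sᶜ, sgn (Function.update σ j false) i * (L * t.1 i))
            = fun t : ↥T' => g t - L * t.1 j := by
          funext t
          rw [← Finset.insert_erase hjc, Finset.sum_insert (Finset.notMem_erase j _),
            c1, c2, sgn_update_same, hg]
          simp only [Bool.false_eq_true, if_false]; ring
        have b1 := Fbd s sᶜ (Function.update σ j true) (Function.update σ j true)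
        rw [eqC] at b1
        have b2 := Fbd s sᶜ (Function.update σ j false) (Function.update σ j false)
        rw [eqD] at b2
        unfold Frad
        rw [eqA, eqB, eqC, eqD]
        exact key_step g (fun t => A (t.1 j)) (fun t => t.1 j) L
          (fun a b => hL (a.1 j) (b.1 j)) b1 b2
      linarith
  -- step 1: remove absolute values
  have step1 : ∀ σ : Fin n → Bool,
      (⨆ t : T, |∑ i, sgn σ i * A (t.1 i)|) ≤
        (⨆ t : T', ∑ i, sgn σ i * A (t.1 i)) +
          (⨆ t : T', ∑ i, sgn (fun k => !σ k) i * A (t.1 i)) := by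
    intro σ
    have eneg : ∀ t : ↥T', ∑ i, sgn (fun k => !σ k) i * A (t.1 i)
        = -∑ i, sgn σ i * A (t.1 i) := by
      intro t
      rw [← Finset.sum_neg_distrib]
      exact Finset.sum_congr rfl fun i _ => by rw [sgn_not]; ring
    have hz0 : ∀ (τ : Fin n → Bool),
        (0:ℝ) ≤ ⨆ t : T', ∑ i, sgn τ i * A (t.1 i) := by
      intro τ
      have := le_ciSup (psibd τ) (⟨0, h0T'⟩ : ↥T')
      simpa [hA0] using this
    refine ciSup_le fun t => ?_
    have htT' : (t.1 : Fin n → ℝ) ∈ T' := Set.mem_insert_of_mem _ t.2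
    rw [abs_le]
    constructor
    · have h1 : ∑ i, sgn (fun k => !σ k) i * A (t.1 i) ≤
          ⨆ t : T', ∑ i, sgn (fun k => !σ k) i * A (t.1 i) :=
        le_ciSup (psibd _) (⟨t.1, htT'⟩ : ↥T')
      rw [eneg ⟨t.1, htT'⟩] at h1
      have h2 := hz0 σ
      linarith
    · have h1 : ∑ i, sgn σ i * A (t.1 i) ≤ ⨆ t : T', ∑ i, sgn σ i * A (t.1 i) :=
        le_ciSup (psibd σ) (⟨t.1, htT'⟩ : ↥T')
      have h2 := hz0 (fun k => !σ k)
      linarith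
  -- step 2: symmetry of the sign flip
  have flipinv : Function.Involutive (fun σ : Fin n → Bool => fun k => !σ k) := by
    intro σ; funext k; simp
  have step2 : ∑ σ : Fin n → Bool, (⨆ t : T', ∑ i, sgn (fun k => !σ k) i * A (t.1 i))
      = ∑ σ : Fin n → Bool, (⨆ t : T', ∑ i, sgn σ i * A (t.1 i)) :=
    Equiv.sum_comp flipinv.toPerm
      (fun σ => ⨆ t : T', ∑ i, sgn σ i * A (t.1 i))
  -- step 3: identify sup psi with Frad univ
  have step3 : ∀ σ : Fin n → Bool,
      (⨆ t : T', ∑ i, sgn σ i * A (t.1 i)) = Frad T' A L Finset.univ σ := by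
    intro σ
    unfold Frad
    exact congrArg iSup (funext fun t => by
      rw [Finset.compl_univ, Finset.sum_empty, add_zero])
  -- step 4: bound Frad ∅
  have step4 : ∀ σ : Fin n → Bool,
      Frad T' A L ∅ σ ≤ L * ⨆ t : T, |∑ i, sgn σ i * t.1 i| := by
    intro σ
    have supabs0 : (0:ℝ) ≤ ⨆ t : T, |∑ i, sgn σ i * t.1 i| := by
      obtain ⟨t0, ht0⟩ := hTne
      exact le_trans (abs_nonneg _) (le_ciSup (absbd σ) (⟨t0, ht0⟩ : ↥T))
    unfold Frad
    refine ciSup_le fun t => ?_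
    rcases t.2 with h | h
    · rw [Finset.sum_empty, zero_add]
      have : ∀ i ∈ (∅ : Finset (Fin n))ᶜ, sgn σ i * (L * t.1 i) = 0 := by
        intro i _; rw [show t.1 = 0 from h]; simp
      rw [Finset.sum_eq_zero this]
      exact mul_nonneg hL0 supabs0
    · rw [Finset.sum_empty, zero_add]
      have e1 : ∑ i ∈ (∅ : Finset (Fin n))ᶜ, sgn σ i * (L * t.1 i)
          = L * ∑ i ∈ (∅ : Finset (Fin n))ᶜ, sgn σ i * t.1 i := by
        rw [Finset.mul_sum]
        exact Finset.sum_congr rfl fun i _ => by ring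
      rw [e1]
      refine mul_le_mul_of_nonneg_left ?_ hL0
      have e2 : (∅ : Finset (Fin n))ᶜ = Finset.univ := by simp
      rw [e2]
      calc ∑ i, sgn σ i * t.1 i ≤ |∑ i, sgn σ i * t.1 i| := le_abs_self _
        _ ≤ ⨆ t : T, |∑ i, sgn σ i * t.1 i| := le_ciSup (absbd σ) (⟨t.1, h⟩ : ↥T)
  -- assemble
  have main : ∑ σ : Fin n → Bool, (⨆ t : T, |∑ i, sgn σ i * A (t.1 i)|) ≤
      2 * L * ∑ σ : Fin n → Bool, (⨆ t : T, |∑ i, sgn σ i * t.1 i|) := by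
    calc ∑ σ : Fin n → Bool, (⨆ t : T, |∑ i, sgn σ i * A (t.1 i)|)
        ≤ ∑ σ : Fin n → Bool, ((⨆ t : T', ∑ i, sgn σ i * A (t.1 i)) +
            (⨆ t : T', ∑ i, sgn (fun k => !σ k) i * A (t.1 i))) :=
          Finset.sum_le_sum fun σ _ => step1 σ
      _ = 2 * ∑ σ : Fin n → Bool, (⨆ t : T', ∑ i, sgn σ i * A (t.1 i)) := by
          rw [Finset.sum_add_distrib, step2]; ring
      _ = 2 * ∑ σ : Fin n → Bool, Frad T' A L Finset.univ σ := by
          rw [Finset.sum_congr rfl fun σ _ => step3 σ]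
      _ ≤ 2 * ∑ σ : Fin n → Bool, Frad T' A L ∅ σ := by
          have := core Finset.univ; linarith
      _ ≤ 2 * ∑ σ : Fin n → Bool, (L * ⨆ t : T, |∑ i, sgn σ i * t.1 i|) := by
          have := Finset.sum_le_sum fun σ (_ : σ ∈ Finset.univ) => step4 σ
          linarith
      _ = 2 * L * ∑ σ : Fin n → Bool, (⨆ t : T, |∑ i, sgn σ i * t.1 i|) := by
          rw [← Finset.mul_sum]; ring
  have hpos : (0:ℝ) ≤ 1 / 2 ^ n := by positivity
  calc (1 / 2 ^ n : ℝ) * ∑ σ : Fin n → Bool, (⨆ t : T, |∑ i, sgn σ i * A (t.1 i)|)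
      ≤ (1 / 2 ^ n : ℝ) * (2 * L * ∑ σ : Fin n → Bool, (⨆ t : T, |∑ i, sgn σ i * t.1 i|)) :=
        mul_le_mul_of_nonneg_left main hpos
    _ = 2 * L * ((1 / 2 ^ n : ℝ) * ∑ σ : Fin n → Bool, (⨆ t : T, |∑ i, sgn σ i * t.1 i|)) := by
        ring
end
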